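/- Fix real parameters μ₁, μ₂, μ₃, μ₄ and let F_{ij} : ℝ⁴ → ℝ be the antisymmetric components F₁₂ = μ₁, F₁₃ = μ₁x₁ + μ₃, F₂₃ = μ₁x₂ + μ₄, F₃₄ = μ₂, F₁₄ = F₂₄ = 0 (F_{ji} = −F_{ij}, F_{ii} = 0). Let ξ₁(x) = (cos x₃, −sin x₃, 0, 0), ξ₂(x) = (sin x₃, cos x₃, 0, 0), ξ₃(x) = (0,0,1,0), ξ₄(x) = (0,0,0,1) be vector fields on ℝ⁴. Then the 2-form F is invariant along each ξₐ: for every a ∈ {1,2,3,4}, all i, j ∈ {1,2,3,4} and all x ∈ ℝ⁴, the Lie derivative components vanish: Σₖ [ ξₐᵏ(x) ∂ₖF_{ij}(x) + F_{kj}(x) ∂ᵢξₐᵏ(x) + F_{ik}(x) ∂ⱼξₐᵏ(x) ] = 0. -/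

import Mathlib

/-! Every component of `F` and of the `ξₐ` is built from the coordinates by sums, constant
multiples, `cos` and `sin`, so the chain rule computes all partial derivatives, and each
component of `L_{ξₐ}F` becomes a polynomial identity in `x`, `sin x₃` and `cos x₃`. -/

noncomputable section

/-- The partial derivative `∂ᵢ f (x)` of a function on `ℝ⁴` (Fréchet derivative in
the `i`-th coordinate direction). -/
def pd (i : Fin 4) (f : (Fin 4 → ℝ) → ℝ) (x : Fin 4 → ℝ) : ℝ :=
  fderiv ℝ f x (Pi.single i 1)

/-- The antisymmetric component matrix `F_{ij}` of the right-invariant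
electromagnetic field 2-form on `E(2) × ℝ`: `F₁₂ = μ₁`, `F₁₃ = μ₁x₁ + μ₃`,
`F₂₃ = μ₁x₂ + μ₄`, `F₃₄ = μ₂`, `F₁₄ = F₂₄ = 0` (indices from `0`). -/
def Fm (μ₁ μ₂ μ₃ μ₄ : ℝ) (x : Fin 4 → ℝ) : Matrix (Fin 4) (Fin 4) ℝ :=
  !![0, μ₁, μ₁ * x 0 + μ₃, 0;
     -μ₁, 0, μ₁ * x 1 + μ₄, 0;
     -(μ₁ * x 0 + μ₃), -(μ₁ * x 1 + μ₄), 0, μ₂;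
     0, 0, -μ₂, 0]

/-- The Killing (left-invariant) vector fields `ξ₁, ξ₂, ξ₃, ξ₄` of `E(2) × ℝ`
on `ℝ⁴` (indexed from `0`). -/
def ξ : Fin 4 → ((Fin 4 → ℝ) → (Fin 4 → ℝ)) :=
  ![fun x => ![Real.cos (x 2), -Real.sin (x 2), 0, 0],
    fun x => ![Real.sin (x 2), Real.cos (x 2), 0, 0],
    fun _ => ![0, 0, 1, 0],
    fun _ => ![0, 0, 0, 1]]

section PartialDerivative

variable {f g : (Fin 4 → ℝ) → ℝ} {x : Fin 4 → ℝ} (i : Fin 4)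

@[simp] lemma pd_const (c : ℝ) : pd i (fun _ => c) x = 0 := by
  simp [pd]

@[simp] lemma pd_apply (j : Fin 4) :
    pd i (fun y => y j) x = (Pi.single i 1 : Fin 4 → ℝ) j := by
  simp [pd, fderiv_apply]

lemma pd_add (hf : DifferentiableAt ℝ f x) (hg : DifferentiableAt ℝ g x) :
    pd i (fun y => f y + g y) x = pd i f x + pd i g x := by
  simp [pd, fderiv_fun_add hf hg]

@[simp] lemma pd_neg : pd i (fun y => -f y) x = -pd i f x := by
  simp [pd]

lemma pd_const_mul (c : ℝ) (hf : DifferentiableAt ℝ f x) :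
    pd i (fun y => c * f y) x = c * pd i f x := by
  simp [pd, fderiv_const_mul hf]

lemma pd_cos (hf : DifferentiableAt ℝ f x) :
    pd i (fun y => Real.cos (f y)) x = -Real.sin (f x) * pd i f x := by
  simp [pd, hf.hasFDerivAt.cos.fderiv]

lemma pd_sin (hf : DifferentiableAt ℝ f x) :
    pd i (fun y => Real.sin (f y)) x = Real.cos (f x) * pd i f x := by
  simp [pd, hf.hasFDerivAt.sin.fderiv]

end PartialDerivative

/-- the 2-form `F` is invariant along each Killing field `ξₐ`: all
components of the Lie derivative `(L_{ξₐ}F)_{ij} = ξₐᵏ∂ₖF_{ij} + F_{kj}∂ᵢξₐᵏ + F_{ik}∂ⱼξₐᵏ`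
vanish. -/
theorem field_two_form_invariant (μ₁ μ₂ μ₃ μ₄ : ℝ) :
    ∀ (a i j : Fin 4) (x : Fin 4 → ℝ),
      (∑ k : Fin 4,
        (ξ a x k * pd k (fun y => Fm μ₁ μ₂ μ₃ μ₄ y i j) x
          + Fm μ₁ μ₂ μ₃ μ₄ x k j * pd i (fun y => ξ a y k) x
          + Fm μ₁ μ₂ μ₃ μ₄ x i k * pd j (fun y => ξ a y k) x)) = 0 := by
  intro a i j x
  fin_cases a <;> fin_cases i <;> fin_cases j <;>
    simp (disch := fun_prop) [Fm, ξ, Fin.sum_univ_four, Pi.single_apply, pd_add, pd_const_mul,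
      pd_cos, pd_sin] <;>
    ring
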